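/- Let G be a simple graph on a finite vertex set V containing four pairwise distinct vertices s, t, u, v with u adjacent to v in G. Let G' be the simple graph on V together with two new vertices w and z, whose adjacency agrees with that of G on V except that u and v are not adjacent in G' and s and t are not adjacent in G', and additionally u ~ w, w ~ v, s ~ z, and z ~ t in G'. Then G contains a simple path from s to t that traverses the edge {u, v} if and only if G' contains two simple paths from w to z that are internally vertex-disjoint, i.e., they share no vertices other than w and z. -/

import Mathlib

/-!
Splitting an `s`–`t` path at the edge `uv` leaves two vertex-disjoint paths from `{u, v}` to
`{s, t}`; they avoid the edges `uv` and `st`, since each of these has an endpoint on the other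
path. Conversely, two such paths are joined through `uv` into an `s`–`t` path. In `G'` the new
vertex `w` sees exactly `{u, v}` and `z` exactly `{s, t}`, so internally disjoint `w`–`z` paths in
`G'` are the same as vertex-disjoint `{u, v}`–`{s, t}` paths in `G` with `uv` and `st` deleted.
-/

open Function

theorem Sym2.mk_eq_of_mem_pair {α : Type*} {a b u v : α} (ha : a ∈ ({u, v} : Set α))
    (hb : b ∈ ({u, v} : Set α)) (hab : a ≠ b) : s(a, b) = s(u, v) :=
  ((Sym2.mem_and_mem_iff hab).mp ⟨by simpa using ha, by simpa using hb⟩).symm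

namespace SimpleGraph

variable {V W ι : Type*}

namespace Walk

variable {G : SimpleGraph V}

theorem exists_eq_append_cons_of_mem_edges {x y : V} {e : Sym2 V} :
    ∀ {p : G.Walk x y}, e ∈ p.edges →
      ∃ (a b : V) (h : G.Adj a b) (p₁ : G.Walk x a) (p₂ : G.Walk b y),
        s(a, b) = e ∧ p = p₁.append (cons h p₂)
  | cons h p, he => by
    rcases List.mem_cons.mp (edges_cons h p ▸ he) with rfl | he
    · exact ⟨_, _, h, nil, p, rfl, rfl⟩
    · obtain ⟨a, b, h', p₁, p₂, rfl, rfl⟩ := exists_eq_append_cons_of_mem_edges he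
      exact ⟨a, b, h', cons h p₁, p₂, rfl, rfl⟩

theorem isPath_append_cons_iff {x a b y : V} {p : G.Walk x a} {h : G.Adj a b}
    {q : G.Walk b y} :
    (p.append (cons h q)).IsPath ↔ p.IsPath ∧ q.IsPath ∧ p.support.Disjoint q.support := by
  simp only [isPath_def, support_append, support_cons, List.tail_cons, List.nodup_append']

theorem exists_support_map_eq {K : SimpleGraph W} {f : V → W} (hf : Injective f)
    (hadj : ∀ a b, K.Adj (f a) (f b) → G.Adj a b) {x y : W} (q : K.Walk x y)
    (hq : ∀ w ∈ q.support, w ∈ Set.range f) {a b : V} (ha : f a = x) (hb : f b = y) :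
    ∃ p : G.Walk a b, p.support.map f = q.support := by
  induction q generalizing a with
  | nil =>
    obtain rfl : a = b := hf (ha.trans hb.symm)
    exact ⟨nil, by simp [ha]⟩
  | cons h q ih =>
    subst ha
    obtain ⟨c, rfl⟩ := hq _ (List.mem_cons_of_mem _ q.start_mem_support)
    obtain ⟨p, hp⟩ := ih (fun w hw => hq w (List.mem_cons_of_mem _ hw)) rfl hb
    exact ⟨cons (hadj _ _ h) p, by simp [hp]⟩

end Walk

def HasTwoDisjointPaths (H : SimpleGraph V) (A B : Set V) : Prop :=
  ∃ (a b c d : V) (P : H.Walk a c) (Q : H.Walk b d), a ∈ A ∧ b ∈ A ∧ c ∈ B ∧ d ∈ B ∧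
    P.IsPath ∧ Q.IsPath ∧ P.support.Disjoint Q.support

def HasTwoInternallyDisjointPaths (K : SimpleGraph W) (x y : W) : Prop :=
  ∃ q₁ q₂ : K.Walk x y, q₁.IsPath ∧ q₂.IsPath ∧
    ∀ w, w ∈ q₁.support → w ∈ q₂.support → w = x ∨ w = y

section PathThroughEdge

variable {G : SimpleGraph V} {s t u v : V}

theorem exists_isPath_mem_edges_iff_hasTwoDisjointPaths (hadj : G.Adj u v) :
    (∃ p : G.Walk s t, p.IsPath ∧ s(u, v) ∈ p.edges) ↔ G.HasTwoDisjointPaths {u, v} {s, t} := by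
  constructor
  · rintro ⟨p, hp, he⟩
    obtain ⟨a, b, h, p₁, p₂, hab, rfl⟩ := Walk.exists_eq_append_cons_of_mem_edges he
    obtain ⟨hp₁, hp₂, hdisj⟩ := Walk.isPath_append_cons_iff.mp hp
    refine ⟨a, b, s, t, p₁.reverse, p₂, ?_, ?_, by simp, by simp, hp₁.reverse, hp₂,
      by simpa using hdisj⟩
    · exact Sym2.mem_iff.mp (hab ▸ Sym2.mem_mk_left a b)
    · exact Sym2.mem_iff.mp (hab ▸ Sym2.mem_mk_right a b)
  · rintro ⟨a, b, c, d, P, Q, ha, hb, hc, hd, hP, hQ, hPQ⟩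
    have hab := Sym2.mk_eq_of_mem_pair ha hb (hPQ P.start_mem_support <| · ▸ Q.start_mem_support)
    have hcd := Sym2.mk_eq_of_mem_pair hc hd (hPQ P.end_mem_support <| · ▸ Q.end_mem_support)
    have h : G.Adj a b := by rwa [← mem_edgeSet, hab, mem_edgeSet]
    have hr : (P.reverse.append (.cons h Q)).IsPath :=
      Walk.isPath_append_cons_iff.mpr ⟨hP.reverse, hQ, by simpa using hPQ⟩
    have he : s(u, v) ∈ (P.reverse.append (.cons h Q)).edges := by simp [hab]
    rcases Sym2.eq_iff.mp hcd with ⟨rfl, rfl⟩ | ⟨rfl, rfl⟩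
    · exact ⟨_, hr, he⟩
    · exact ⟨_, hr.reverse, by rwa [Walk.edges_reverse, List.mem_reverse]⟩

theorem hasTwoDisjointPaths_deleteEdges_iff :
    (G.deleteEdges {s(u, v), s(s, t)}).HasTwoDisjointPaths {u, v} {s, t} ↔
      G.HasTwoDisjointPaths {u, v} {s, t} := by
  constructor
  · rintro ⟨a, b, c, d, P, Q, ha, hb, hc, hd, hP, hQ, hPQ⟩
    exact ⟨a, b, c, d, P.mapLe (deleteEdges_le _), Q.mapLe (deleteEdges_le _), ha, hb, hc, hd,
      hP.mapLe _, hQ.mapLe _, by simpa [Walk.support_mapLe_eq_support] using hPQ⟩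
  · rintro ⟨a, b, c, d, P, Q, ha, hb, hc, hd, hP, hQ, hPQ⟩
    have avoid : ∀ {x y x' y' : V} (R : G.Walk x y), x' ∈ ({u, v} : Set V) →
        y' ∈ ({s, t} : Set V) → x' ∉ R.support → y' ∉ R.support →
        ∀ e ∈ R.edges, e ∉ ({s(u, v), s(s, t)} : Set (Sym2 V)) := by
      rintro x y x' y' R hx' hy' hx'R hy'R e he (rfl | rfl)
      · exact hx'R (R.mem_support_of_mem_edges he (by simpa using hx'))
      · exact hy'R (R.mem_support_of_mem_edges he (by simpa using hy'))
    refine ⟨a, b, c, d,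
      P.toDeleteEdges _ (avoid P hb hd (hPQ · Q.start_mem_support) (hPQ · Q.end_mem_support)),
      Q.toDeleteEdges _ (avoid Q ha hc (hPQ P.start_mem_support) (hPQ P.end_mem_support)),
      ha, hb, hc, hd, hP.transfer _, hQ.transfer _, by simpa using hPQ⟩

end PathThroughEdge

def withTerminals (H : SimpleGraph V) (N : ι → Set V) : SimpleGraph (V ⊕ ι) where
  Adj
    | .inl a, .inl b => H.Adj a b
    | .inl a, .inr i => a ∈ N i
    | .inr i, .inl a => a ∈ N i
    | .inr _, .inr _ => False
  symm := ⟨by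
    rintro (a | i) (b | j) h
    exacts [h.symm, h, h, h]⟩
  loopless := ⟨by
    rintro (a | i) h
    exacts [H.loopless.irrefl a h, h]⟩

section WithTerminals

variable {H : SimpleGraph V}

section

variable {N : ι → Set V}

@[simp] theorem withTerminals_adj_inl_inl {a b : V} :
    (withTerminals H N).Adj (.inl a) (.inl b) ↔ H.Adj a b := Iff.rfl

@[simp] theorem withTerminals_adj_inl_inr {a : V} {i : ι} :
    (withTerminals H N).Adj (.inl a) (.inr i) ↔ a ∈ N i := Iff.rfl

@[simp] theorem withTerminals_adj_inr_inl {a : V} {i : ι} :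
    (withTerminals H N).Adj (.inr i) (.inl a) ↔ a ∈ N i := Iff.rfl

@[simp] theorem not_withTerminals_adj_inr_inr {i j : ι} :
    ¬(withTerminals H N).Adj (.inr i) (.inr j) := id

variable (H N) in
@[simps]
def inlHom : H →g withTerminals H N := ⟨Sum.inl, id⟩

def Walk.betweenTerminals {a c : V} {i j : ι} (P : H.Walk a c) (ha : a ∈ N i) (hc : c ∈ N j) :
    (withTerminals H N).Walk (.inr i) (.inr j) :=
  -- the `show`s phrase the new edges through `inlHom`, so that the term typechecks reducibly
  .cons (show (withTerminals H N).Adj (.inr i) (inlHom H N a) from ha)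
    ((P.map (inlHom H N)).concat (show (withTerminals H N).Adj (inlHom H N c) (.inr j) from hc))

variable {a c : V} {i j : ι} {P : H.Walk a c} {ha : a ∈ N i} {hc : c ∈ N j}

@[simp] theorem Walk.support_betweenTerminals :
    (P.betweenTerminals ha hc).support = .inr i :: (P.support.map .inl ++ [.inr j]) := by
  simp [betweenTerminals, support_concat]

theorem Walk.isPath_betweenTerminals_iff (hij : i ≠ j) :
    (P.betweenTerminals ha hc).IsPath ↔ P.IsPath := by
  simp [isPath_def, List.nodup_append, List.nodup_map_iff Sum.inl_injective, hij]

end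

variable {N : Fin 2 → Set V}

theorem Walk.exists_eq_betweenTerminals (q : (withTerminals H N).Walk (.inr 0) (.inr 1))
    (hq : q.IsPath) :
    ∃ (a c : V) (ha : a ∈ N 0) (hc : c ∈ N 1) (P : H.Walk a c), q = P.betweenTerminals ha hc := by
  -- terminals are pairwise non-adjacent, so the second and the second-to-last vertex lie in `V`
  obtain ⟨a | k, ha, q, rfl⟩ := exists_eq_cons_of_ne (by simp) q
  swap
  · exact (not_withTerminals_adj_inr_inr ha).elim
  obtain ⟨y, h, q, rfl⟩ := exists_eq_cons_of_ne (by simp) q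
  obtain ⟨c | k, r, hc, hr⟩ := exists_cons_eq_concat h q
  swap
  · exact (not_withTerminals_adj_inr_inr hc).elim
  rw [hr] at hq ⊢
  have hnd := hq.support_nodup
  rw [support_cons, support_concat, List.nodup_cons] at hnd
  have hr_inl : ∀ x ∈ r.support, x ∈ Set.range Sum.inl := by
    rintro (x | k) hx
    · exact ⟨x, rfl⟩
    · fin_cases k
      · exact (hnd.1 (List.mem_append_left _ hx)).elim
      · exact (List.disjoint_of_nodup_append hnd.2 hx (List.mem_singleton_self _)).elim
  obtain ⟨P, hP⟩ := exists_support_map_eq Sum.inl_injective (fun _ _ h => h) r hr_inl rfl rfl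
  refine ⟨a, c, withTerminals_adj_inr_inl.mp ha, withTerminals_adj_inl_inr.mp hc, P,
    ext_support ?_⟩
  rw [support_betweenTerminals, hP, support_cons, support_concat]

theorem hasTwoInternallyDisjointPaths_withTerminals_iff :
    (withTerminals H N).HasTwoInternallyDisjointPaths (.inr 0) (.inr 1) ↔
      H.HasTwoDisjointPaths (N 0) (N 1) := by
  constructor
  · rintro ⟨q₁, q₂, hq₁, hq₂, hdisj⟩
    obtain ⟨a, c, ha, hc, P, rfl⟩ := q₁.exists_eq_betweenTerminals hq₁
    obtain ⟨b, d, hb, hd, Q, rfl⟩ := q₂.exists_eq_betweenTerminals hq₂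
    rw [Walk.isPath_betweenTerminals_iff (by decide)] at hq₁ hq₂
    refine ⟨a, b, c, d, P, Q, ha, hb, hc, hd, hq₁, hq₂, fun x hxP hxQ => ?_⟩
    simpa using hdisj (.inl x) (by simpa using hxP) (by simpa using hxQ)
  · rintro ⟨a, b, c, d, P, Q, ha, hb, hc, hd, hP, hQ, hPQ⟩
    refine ⟨P.betweenTerminals ha hc, Q.betweenTerminals hb hd,
      (Walk.isPath_betweenTerminals_iff (by decide)).2 hP,
      (Walk.isPath_betweenTerminals_iff (by decide)).2 hQ, fun x hxP hxQ => ?_⟩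
    rcases x with y | k
    · exact (hPQ (by simpa using hxP) (by simpa using hxQ)).elim
    · fin_cases k <;> simp

end WithTerminals

end SimpleGraph

open SimpleGraph

theorem stmt_14 {V : Type*}
    (G : SimpleGraph V) (s t u v : V)
    (hadj : G.Adj u v)
    -- `G'` adds two new vertices `w = Sum.inr 0` and `z = Sum.inr 1`; it agrees
    -- with `G` on `V` except that `u, v` and `s, t` are no longer adjacent, and
    -- additionally `u ~ w`, `w ~ v`, `s ~ z`, `z ~ t`.
    (G' : SimpleGraph (V ⊕ Fin 2))
    (hG' : G' = SimpleGraph.fromRel (fun x y =>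
      match x, y with
      | Sum.inl a, Sum.inl b =>
          G.Adj a b ∧ ¬(a = u ∧ b = v) ∧ ¬(a = v ∧ b = u) ∧
            ¬(a = s ∧ b = t) ∧ ¬(a = t ∧ b = s)
      | Sum.inl a, Sum.inr i =>
          (i = 0 ∧ (a = u ∨ a = v)) ∨ (i = 1 ∧ (a = s ∨ a = t))
      | _, _ => False)) :
    -- `G` has a simple `s`–`t` path traversing the edge `{u, v}` iff `G'` has two
    -- internally vertex-disjoint simple paths from `w` to `z`.
    (∃ p : G.Walk s t, p.IsPath ∧ Sym2.mk u v ∈ p.edges) ↔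
    (∃ q₁ q₂ : G'.Walk (Sum.inr 0) (Sum.inr 1),
      q₁.IsPath ∧ q₂.IsPath ∧
      ∀ x, x ∈ q₁.support → x ∈ q₂.support →
        x = Sum.inr 0 ∨ x = Sum.inr 1) := by
  have hG'_eq : G' = withTerminals (G.deleteEdges {s(u, v), s(s, t)}) ![{u, v}, {s, t}] := by
    subst hG'
    ext (a | i) (b | j)
    · simp only [fromRel_adj, withTerminals_adj_inl_inl, deleteEdges_adj, Set.mem_insert_iff,
        Set.mem_singleton_iff, Sym2.eq_iff, ne_eq, Sum.inl.injEq]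
      grind [G.adj_comm, G.ne_of_adj]
    · fin_cases j <;> simp
    · fin_cases i <;> simp
    · simp
  rw [hG'_eq]
  exact (exists_isPath_mem_edges_iff_hasTwoDisjointPaths hadj).trans <|
    hasTwoDisjointPaths_deleteEdges_iff.symm.trans
      (hasTwoInternallyDisjointPaths_withTerminals_iff (N := ![{u, v}, {s, t}])).symm
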